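/- arXiv:2502.08998 — 2 statements merged into one kernel-verified Lean document; each statement's English description precedes it below -/
import Mathlib

section
/- Let E, P, Y be vector spaces over ℝ, let F : E × P → Y be a linear map, let Z be a subspace of Y, and let W be a subspace of E × P. Assume: (a) the range of F together with Z spans Y, i.e. F(E × P) + Z = Y; (b) F maps W into Z, i.e. F(W) ⊆ Z; and (c) the projection (x,p) ↦ p maps W onto P. Then F(E × {0}) + Z = Y, i.e. the image under F of the subspace E × {0} together with Z spans Y. -/
/-!
Since `W` projects onto `P`, every `(e, p)` differs from an element of `W` by a vector of the form
`(e', 0)`; hence `E × P = (E × {0}) + W`. Applying `F` and using `F(W) ⊆ Z` gives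
`range F ⊆ F(E × {0}) + Z`, and hypothesis (a) finishes the proof.
-/

namespace Submodule

variable {R M N Y : Type*} [Ring R] [AddCommGroup M] [Module R M] [AddCommGroup N] [Module R N]
  [AddCommGroup Y] [Module R Y]

theorem prod_top_bot_eq_ker_snd :
    (⊤ : Submodule R M).prod (⊥ : Submodule R N) = LinearMap.ker (LinearMap.snd R M N) := by
  ext ⟨m, n⟩
  simp

theorem sup_prod_top_bot_eq_top {W : Submodule R (M × N)} (hW : W.map (LinearMap.snd R M N) = ⊤) :
    W ⊔ (⊤ : Submodule R M).prod ⊥ = ⊤ := by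
  rwa [prod_top_bot_eq_ker_snd, ← LinearMap.map_eq_top_iff Submodule.range_snd]

theorem range_le_map_prod_top_bot_sup {F : (M × N) →ₗ[R] Y} {W : Submodule R (M × N)}
    {Z : Submodule R Y} (hWZ : W.map F ≤ Z) (hW : W.map (LinearMap.snd R M N) = ⊤) :
    LinearMap.range F ≤ ((⊤ : Submodule R M).prod ⊥).map F ⊔ Z := by
  rw [LinearMap.range_eq_map, ← sup_prod_top_bot_eq_top hW, map_sup]
  exact sup_le (hWZ.trans le_sup_right) le_sup_left

end Submodule

/-- Linear-algebraic core of the Foliated Parametric Transversality Theorem (Theorem 5.2). -/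
theorem stmt_1 (E P Y : Type*) [AddCommGroup E] [Module ℝ E] [AddCommGroup P] [Module ℝ P]
    [AddCommGroup Y] [Module ℝ Y] (F : (E × P) →ₗ[ℝ] Y) (Z : Submodule ℝ Y)
    (W : Submodule ℝ (E × P))
    (ha : LinearMap.range F ⊔ Z = ⊤)
    (hb : W.map F ≤ Z)
    (hc : W.map (LinearMap.snd ℝ E P) = ⊤) :
    Submodule.map F ((⊤ : Submodule ℝ E).prod (⊥ : Submodule ℝ P)) ⊔ Z = ⊤ := by
  rw [eq_top_iff, ← ha]
  exact sup_le (Submodule.range_le_map_prod_top_bot_sup hb hc) le_sup_right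
end

section
/- Let p : ℝ → ℝ be differentiable at every v > 0 with p'(v) < 0 for all v > 0. Fix (u_g, v_g) ∈ ℝ × (0,∞) and define H : ℝ × (0,∞) → ℝ by H(u,v) = (u − u_g)² + (p(v) − p(v_g))·(v − v_g). Then for every (u,v) ∈ ℝ × (0,∞) with (u,v) ≠ (u_g, v_g) and H(u,v) = 0, the gradient of H at (u,v), namely the vector (2(u − u_g), p'(v)·(v − v_g) + p(v) − p(v_g)), is not the zero vector. -/
/-!
On the Hugoniot locus a vanishing first gradient component forces `u = u_g`, and then
`H = 0` reads `(p v - p v_g) (v - v_g) = 0`. Since `p' < 0`, `p` is strictly decreasing on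
`(0, ∞)`, so this product is negative unless `v = v_g`: the only critical zero of `H` is the
excluded point itself.
-/

open Set

theorem StrictAntiOn.sub_mul_sub_neg {f : ℝ → ℝ} {s : Set ℝ} (hf : StrictAntiOn f s)
    {x y : ℝ} (hx : x ∈ s) (hy : y ∈ s) (hxy : x ≠ y) : (f x - f y) * (x - y) < 0 := by
  rcases hxy.lt_or_gt with hlt | hgt
  · exact mul_neg_of_pos_of_neg (sub_pos.2 (hf hx hy hlt)) (sub_neg.2 hlt)
  · exact mul_neg_of_neg_of_pos (sub_neg.2 (hf hy hx hgt)) (sub_pos.2 hgt)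

theorem strictAntiOn_Ioi_of_deriv_neg {f : ℝ → ℝ} {a : ℝ}
    (hdiff : ∀ x > a, DifferentiableAt ℝ f x) (hneg : ∀ x > a, deriv f x < 0) :
    StrictAntiOn f (Ioi a) :=
  strictAntiOn_of_deriv_neg (convex_Ioi a)
    (fun x hx => (hdiff x hx).continuousAt.continuousWithinAt)
    (by simpa only [interior_Ioi, mem_Ioi] using hneg)

/-- Regular manifold assumption for the p-system: the gradient of the Hugoniot objective
function is nonzero at every point of the punctured Hugoniot locus (Section 6). -/
theorem stmt_15 (p : ℝ → ℝ) (hdiff : ∀ v > (0 : ℝ), DifferentiableAt ℝ p v)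
    (hneg : ∀ v > (0 : ℝ), deriv p v < 0) (ug vg : ℝ) (hvg : 0 < vg) :
    ∀ u v : ℝ, 0 < v → (u, v) ≠ (ug, vg) →
      (u - ug) ^ 2 + (p v - p vg) * (v - vg) = 0 →
      (2 * (u - ug), deriv p v * (v - vg) + p v - p vg) ≠ ((0 : ℝ), (0 : ℝ)) := by
  intro u v hv hne hH hgrad
  have hu : u = ug := by linarith [congrArg Prod.fst hgrad]
  subst hu
  have hvvg : v ≠ vg := fun h => hne (by rw [h])
  have hprod := (strictAntiOn_Ioi_of_deriv_neg hdiff hneg).sub_mul_sub_neg hv hvg hvvg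
  rw [sub_self, zero_pow two_ne_zero, zero_add] at hH
  exact hprod.ne hH
end
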